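/- arXiv:2206.02786 — 5 statements merged into one kernel-verified Lean document; each statement's English description precedes it below -/
import Mathlib

section
/- Suppose the hypothesis space ℋ contains at least three distinct elements and the number of environments n satisfies n ≥ 3. Then there exists no aggregation rule F such that (i) for every risk profile r, the choice correspondence F(r) is nonempty-valued on every finite nonempty subset of ℋ and is internally consistent, and (ii) F satisfies Pareto Optimality (PO), Independence of Irrelevant Hypotheses (IIH), Invariance Restriction (IR), and Collective Intelligence (CI) simultaneously. -/
variable {H : Type*}

/-- Internal consistency (α and β properties) of a choice correspondence
defined on all finite subsets of the hypothesis space. -/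
def InternallyConsistent [DecidableEq H] (A : Finset H → Finset H) : Prop :=
  (∀ 𝓕 𝓖 : Finset H, 𝓖 ⊆ 𝓕 → ∀ h : H, h ∈ A 𝓕 → h ∈ 𝓖 → h ∈ A 𝓖) ∧
  (∀ 𝓕 𝓖 : Finset H, 𝓖 ⊆ 𝓕 → ∀ h : H, h ∈ 𝓖 → h ∈ A 𝓕 → A 𝓖 ⊆ A 𝓕)

/-- `F r` is a choice correspondence: it returns a subset of its argument and is
nonempty-valued on every nonempty finite set. -/
def IsChoiceCorrespondence {n : ℕ} (F : (Fin n → H → ℝ) → Finset H → Finset H) : Prop :=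
  ∀ r : Fin n → H → ℝ, (∀ S : Finset H, F r S ⊆ S) ∧
    (∀ S : Finset H, S.Nonempty → (F r S).Nonempty)

/-- Pareto Optimality. -/
def AxPO {n : ℕ} [DecidableEq H] (F : (Fin n → H → ℝ) → Finset H → Finset H) : Prop :=
  ∀ r : Fin n → H → ℝ, ∀ f g : H, (∀ i : Fin n, r i f < r i g) → F r {f, g} = {f}

/-- Independence of Irrelevant Hypotheses. -/
def AxIIH {n : ℕ} (F : (Fin n → H → ℝ) → Finset H → Finset H) : Prop :=
  ∀ r r' : Fin n → H → ℝ, ∀ S : Finset H, S.Nonempty →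
    (∀ i : Fin n, ∀ f ∈ S, ∀ g ∈ S, (r i f ≤ r i g ↔ r' i f ≤ r' i g)) →
    F r S = F r' S

/-- Invariance Restriction. -/
def AxIR {n : ℕ} (F : (Fin n → H → ℝ) → Finset H → Finset H) : Prop :=
  ∀ r r' : Fin n → H → ℝ,
    (∃ a b : Fin n → ℝ, (∀ i : Fin n, 0 < b i) ∧
      ∀ i : Fin n, ∀ h : H, r i h = a i + b i * r' i h) →
    ∀ S : Finset H, S.Nonempty → F r S = F r' S

/-- Collective Intelligence: no single environment dictates the choice. -/
def AxCI {n : ℕ} [DecidableEq H] (F : (Fin n → H → ℝ) → Finset H → Finset H) : Prop :=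
  ¬ ∃ i : Fin n, ∀ r : Fin n → H → ℝ, ∀ f g : H, r i f < r i g → F r {f, g} = {f}

/-- A set of environments `E` is locally decisive over the ordered pair `(f, g)`. -/
def LocallyDecisive {n : ℕ} [DecidableEq H] (F : (Fin n → H → ℝ) → Finset H → Finset H)
    (E : Set (Fin n)) (f g : H) : Prop :=
  ∀ r : Fin n → H → ℝ, (∀ e ∈ E, r e f < r e g) → F r {f, g} = {f}

/-- A set of environments `E` is globally decisive. -/
def GloballyDecisive {n : ℕ} [DecidableEq H] (F : (Fin n → H → ℝ) → Finset H → Finset H)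
    (E : Set (Fin n)) : Prop :=
  ∀ f g : H, f ≠ g → LocallyDecisive F E f g

section ArrowAux

variable {H : Type*} [DecidableEq H] {n : ℕ}

lemma aux_pair_eq (A : Finset H → Finset H) (hsub : ∀ S, A S ⊆ S)
    (x y : H) (hx : x ∈ A {x, y}) (hy : y ∉ A {x, y}) : A {x, y} = {x} := by
  apply Finset.Subset.antisymm
  · intro w hw
    have hw' := hsub _ hw
    simp only [Finset.mem_insert, Finset.mem_singleton] at hw' ⊢
    rcases hw' with rfl | rfl
    · rfl
    · exact absurd hw hy
  · intro w hw
    simp only [Finset.mem_singleton] at hw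
    subst hw; exact hx

lemma aux_trans (A : Finset H → Finset H) (hsub : ∀ S, A S ⊆ S)
    (hne : ∀ S : Finset H, S.Nonempty → (A S).Nonempty)
    (hIC : InternallyConsistent A) (x y z : H)
    (hxy : x ∈ A {x, y}) (hyz : y ∈ A {y, z}) : x ∈ A {x, z} := by
  obtain ⟨w, hw⟩ := hne {x, y, z} ⟨x, by simp⟩
  have hsub1 : ({x, y} : Finset H) ⊆ {x, y, z} := by intro u; simp; tauto
  have hsub2 : ({y, z} : Finset H) ⊆ {x, y, z} := by intro u; simp; tauto
  have hsub3 : ({x, z} : Finset H) ⊆ {x, y, z} := by intro u; simp; tauto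
  have hxT : x ∈ A {x, y, z} → x ∈ A {x, z} := fun hx =>
    hIC.1 {x, y, z} {x, z} hsub3 x hx (by simp)
  have hyT : y ∈ A {x, y, z} → x ∈ A {x, y, z} := fun hy =>
    hIC.2 {x, y, z} {x, y} hsub1 y (by simp) hy hxy
  have hzT : z ∈ A {x, y, z} → y ∈ A {x, y, z} := fun hz =>
    hIC.2 {x, y, z} {y, z} hsub2 z (by simp) hz hyz
  have hwT := hsub _ hw
  simp only [Finset.mem_insert, Finset.mem_singleton] at hwT
  rcases hwT with rfl | rfl | rfl
  · exact hxT hw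
  · exact hxT (hyT hw)
  · exact hxT (hyT (hzT hw))

/-- Almost decisiveness of a coalition over an ordered pair. -/
def ADec (F : (Fin n → H → ℝ) → Finset H → Finset H)
    (E : Set (Fin n)) (x y : H) : Prop :=
  ∀ r : Fin n → H → ℝ, (∀ e ∈ E, r e x < r e y) → (∀ i, i ∉ E → r i y < r i x) →
    F r {x, y} = {x}

lemma step1 {F : (Fin n → H → ℝ) → Finset H → Finset H}
    (hCC : IsChoiceCorrespondence F)
    (hIC : ∀ r, InternallyConsistent (F r)) (hPO : AxPO F) (hIIH : AxIIH F)
    {E : Set (Fin n)} {x y z : H} (hxy : x ≠ y) (hzx : z ≠ x) (hzy : z ≠ y)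
    (hAD : ADec F E x y) : LocallyDecisive F E x z := by
  classical
  intro r hr
  set r'' : Fin n → H → ℝ := fun i h' =>
    if h' = y then (if i ∈ E then (r i x + r i z) / 2 else min (r i x) (r i z) - 1)
    else r i h' with hr''
  have hvx : ∀ i, r'' i x = r i x := fun i => by simp [hr'', hxy]
  have hvz : ∀ i, r'' i z = r i z := fun i => by simp [hr'', hzy]
  have hvyE : ∀ i ∈ E, r'' i y = (r i x + r i z) / 2 := fun i hi => by simp [hr'', hi]
  have hvyO : ∀ i, i ∉ E → r'' i y = min (r i x) (r i z) - 1 := fun i hi => by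
    simp [hr'', hi]
  have h1 : F r'' {x, y} = {x} := hAD r''
    (fun e he => by rw [hvx, hvyE e he]; have := hr e he; linarith)
    (fun i hi => by
      rw [hvx, hvyO i hi]
      have := min_le_left (r i x) (r i z); linarith)
  have h2 : F r'' {y, z} = {y} := hPO r'' y z (fun i => by
    by_cases hi : i ∈ E
    · rw [hvyE i hi, hvz]; have := hr i hi; linarith
    · rw [hvyO i hi, hvz]; have := min_le_right (r i x) (r i z); linarith)
  have hsub := (hCC r'').1
  have hne := (hCC r'').2
  have hx1 : x ∈ F r'' {x, y} := by rw [h1]; simp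
  have hy1 : y ∉ F r'' {x, y} := by rw [h1]; simpa using Ne.symm hxy
  have hy2 : y ∈ F r'' {y, z} := by rw [h2]; simp
  have hxz : x ∈ F r'' {x, z} := aux_trans _ hsub hne (hIC r'') x y z hx1 hy2
  have hzx' : z ∉ F r'' {x, z} := by
    intro hz
    have hz' : z ∈ F r'' {z, x} := by rwa [Finset.pair_comm z x]
    have hyx : y ∈ F r'' {y, x} := aux_trans _ hsub hne (hIC r'') y z x hy2 hz'
    rw [Finset.pair_comm y x] at hyx
    exact hy1 hyx
  have h3 : F r'' {x, z} = {x} := aux_pair_eq _ hsub x z hxz hzx'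
  have h4 : F r {x, z} = F r'' {x, z} := hIIH r r'' {x, z} ⟨x, by simp⟩ (by
    intro i f hf g hg
    have hval : ∀ w ∈ ({x, z} : Finset H), r'' i w = r i w := by
      intro w hw
      simp only [Finset.mem_insert, Finset.mem_singleton] at hw
      rcases hw with rfl | rfl
      · exact hvx i
      · exact hvz i
    rw [hval f hf, hval g hg])
  rw [h4, h3]

lemma step2 {F : (Fin n → H → ℝ) → Finset H → Finset H}
    (hCC : IsChoiceCorrespondence F)
    (hIC : ∀ r, InternallyConsistent (F r)) (hPO : AxPO F) (hIIH : AxIIH F)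
    {E : Set (Fin n)} {x y z : H} (hxy : x ≠ y) (hzx : z ≠ x) (hzy : z ≠ y)
    (hAD : ADec F E x y) : LocallyDecisive F E z y := by
  classical
  intro r hr
  set r'' : Fin n → H → ℝ := fun i h' =>
    if h' = x then (if i ∈ E then (r i z + r i y) / 2 else max (r i z) (r i y) + 1)
    else r i h' with hr''
  have hvz : ∀ i, r'' i z = r i z := fun i => by simp [hr'', hzx]
  have hvy : ∀ i, r'' i y = r i y := fun i => by simp [hr'', Ne.symm hxy]
  have hvxE : ∀ i ∈ E, r'' i x = (r i z + r i y) / 2 := fun i hi => by simp [hr'', hi]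
  have hvxO : ∀ i, i ∉ E → r'' i x = max (r i z) (r i y) + 1 := fun i hi => by
    simp [hr'', hi]
  have h1 : F r'' {z, x} = {z} := hPO r'' z x (fun i => by
    by_cases hi : i ∈ E
    · rw [hvz, hvxE i hi]; have := hr i hi; linarith
    · rw [hvz, hvxO i hi]; have := le_max_left (r i z) (r i y); linarith)
  have h2 : F r'' {x, y} = {x} := hAD r''
    (fun e he => by rw [hvxE e he, hvy]; have := hr e he; linarith)
    (fun i hi => by
      rw [hvy, hvxO i hi]
      have := le_max_right (r i z) (r i y); linarith)
  have hsub := (hCC r'').1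
  have hne := (hCC r'').2
  have hz1 : z ∈ F r'' {z, x} := by rw [h1]; simp
  have hx2 : x ∈ F r'' {x, y} := by rw [h2]; simp
  have hy2 : y ∉ F r'' {x, y} := by rw [h2]; simpa using Ne.symm hxy
  have hzy' : z ∈ F r'' {z, y} := aux_trans _ hsub hne (hIC r'') z x y hz1 hx2
  have hyz' : y ∉ F r'' {z, y} := by
    intro hy
    have hy' : y ∈ F r'' {y, z} := by rwa [Finset.pair_comm y z]
    have hyx : y ∈ F r'' {y, x} := aux_trans _ hsub hne (hIC r'') y z x hy' hz1
    rw [Finset.pair_comm y x] at hyx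
    exact hy2 hyx
  have h3 : F r'' {z, y} = {z} := aux_pair_eq _ hsub z y hzy' hyz'
  have h4 : F r {z, y} = F r'' {z, y} := hIIH r r'' {z, y} ⟨z, by simp⟩ (by
    intro i f hf g hg
    have hval : ∀ w ∈ ({z, y} : Finset H), r'' i w = r i w := by
      intro w hw
      simp only [Finset.mem_insert, Finset.mem_singleton] at hw
      rcases hw with rfl | rfl
      · exact hvz i
      · exact hvy i
    rw [hval f hf, hval g hg])
  rw [h4, h3]

lemma expand {F : (Fin n → H → ℝ) → Finset H → Finset H}
    (hCC : IsChoiceCorrespondence F)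
    (hIC : ∀ r, InternallyConsistent (F r)) (hPO : AxPO F) (hIIH : AxIIH F)
    (hthird : ∀ u v : H, ∃ w, w ≠ u ∧ w ≠ v)
    {E : Set (Fin n)} {x y : H} (hxy : x ≠ y) (hAD : ADec F E x y) :
    GloballyDecisive F E := by
  have LDtoAD : ∀ u v : H, LocallyDecisive F E u v → ADec F E u v :=
    fun u v hld r h1 _ => hld r h1
  have key1 : ∀ a, a ≠ y → ADec F E a y := by
    intro a ha
    by_cases hax : a = x
    · subst hax; exact hAD
    · exact LDtoAD _ _ (step2 hCC hIC hPO hIIH hxy hax ha hAD)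
  have key2 : ∀ a b, a ≠ y → b ≠ a → LocallyDecisive F E a b := by
    intro a b ha hb
    have hADay := key1 a ha
    by_cases hby : b = y
    · rw [hby]
      obtain ⟨c, hca, hcy⟩ := hthird a y
      have l1 : LocallyDecisive F E a c := step1 hCC hIC hPO hIIH ha hca hcy hADay
      have a2 : ADec F E a c := LDtoAD _ _ l1
      exact step1 hCC hIC hPO hIIH (Ne.symm hca) (Ne.symm ha) (Ne.symm hcy) a2
    · exact step1 hCC hIC hPO hIIH ha hb hby hADay
  intro a b hab
  by_cases ha : a = y
  · rw [ha]
    obtain ⟨c, hcy, hcb⟩ := hthird y b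
    rw [ha] at hab
    have l1 : LocallyDecisive F E c b := key2 c b hcy (Ne.symm hcb)
    have a1 : ADec F E c b := LDtoAD _ _ l1
    exact step2 hCC hIC hPO hIIH hcb (Ne.symm hcy) hab a1
  · exact key2 a b ha (Ne.symm hab)

lemma contraction {F : (Fin n → H → ℝ) → Finset H → Finset H}
    (hCC : IsChoiceCorrespondence F)
    (hIC : ∀ r, InternallyConsistent (F r)) (hIIH : AxIIH F)
    {a b c : H} (hab : a ≠ b) (hac : a ≠ c) (hbc : b ≠ c)
    (E1 E2 : Set (Fin n)) (hdisj : ∀ i, i ∈ E1 → i ∉ E2)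
    (hGD : GloballyDecisive F (E1 ∪ E2)) :
    ADec F E1 a c ∨ ADec F E2 c b := by
  classical
  have hd2 : ∀ i, i ∈ E2 → i ∉ E1 := fun i hi h1 => hdisj i h1 hi
  set r : Fin n → H → ℝ := fun i h' =>
    if i ∈ E1 then (if h' = a then 0 else if h' = b then 1 else 2)
    else if i ∈ E2 then (if h' = c then 0 else if h' = a then 1 else 2)
    else (if h' = b then 0 else if h' = c then 1 else 2) with hrdef
  have v1a : ∀ i ∈ E1, r i a = 0 := fun i hi => by simp [hrdef, hi]
  have v1b : ∀ i ∈ E1, r i b = 1 := fun i hi => by simp [hrdef, hi, Ne.symm hab]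
  have v1c : ∀ i ∈ E1, r i c = 2 := fun i hi => by
    simp [hrdef, hi, Ne.symm hac, Ne.symm hbc]
  have v2c : ∀ i ∈ E2, r i c = 0 := fun i hi => by simp [hrdef, hd2 i hi, hi]
  have v2a : ∀ i ∈ E2, r i a = 1 := fun i hi => by simp [hrdef, hd2 i hi, hi, hac]
  have v2b : ∀ i ∈ E2, r i b = 2 := fun i hi => by
    simp [hrdef, hd2 i hi, hi, hbc, Ne.symm hab]
  have v3b : ∀ i, i ∉ E1 → i ∉ E2 → r i b = 0 := fun i h1 h2 => by
    simp [hrdef, h1, h2]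
  have v3c : ∀ i, i ∉ E1 → i ∉ E2 → r i c = 1 := fun i h1 h2 => by
    simp [hrdef, h1, h2, Ne.symm hbc]
  have v3a : ∀ i, i ∉ E1 → i ∉ E2 → r i a = 2 := fun i h1 h2 => by
    simp [hrdef, h1, h2, hab, hac]
  have hsub := (hCC r).1
  have hne := (hCC r).2
  have hFab : F r {a, b} = {a} := hGD a b hab r (by
    intro e he
    rw [Set.mem_union] at he
    rcases he with he1 | he2
    · rw [v1a e he1, v1b e he1]; norm_num
    · rw [v2a e he2, v2b e he2]; norm_num)
  by_cases hca : c ∈ F r {c, a}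
  · right
    have hRa : a ∈ F r {a, b} := by rw [hFab]; simp
    have hnb : b ∉ F r {a, b} := by rw [hFab]; simpa using Ne.symm hab
    have hcb : c ∈ F r {c, b} := aux_trans _ hsub hne (hIC r) c a b hca hRa
    have hbc' : b ∉ F r {c, b} := by
      intro hb
      have hb' : b ∈ F r {b, c} := by rwa [Finset.pair_comm b c]
      have hba : b ∈ F r {b, a} := aux_trans _ hsub hne (hIC r) b c a hb' hca
      rw [Finset.pair_comm b a] at hba
      exact hnb hba
    have hFcb : F r {c, b} = {c} := aux_pair_eq _ hsub c b hcb hbc'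
    intro r' h1 h2
    have sgn : ∀ i, (r i c < r i b ∧ r' i c < r' i b) ∨
        (r i b < r i c ∧ r' i b < r' i c) := by
      intro i
      by_cases hi : i ∈ E2
      · left
        refine ⟨?_, h1 i hi⟩
        rw [v2c i hi, v2b i hi]; norm_num
      · right
        refine ⟨?_, h2 i hi⟩
        by_cases hi1 : i ∈ E1
        · rw [v1b i hi1, v1c i hi1]; norm_num
        · rw [v3b i hi1 hi, v3c i hi1 hi]; norm_num
    have hiih := hIIH r r' {c, b} ⟨c, by simp⟩ (by
      intro i f hf g hg
      simp only [Finset.mem_insert, Finset.mem_singleton] at hf hg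
      rcases sgn i with ⟨u, v⟩ | ⟨u, v⟩ <;> rcases hf with rfl | rfl <;>
        rcases hg with rfl | rfl <;> constructor <;> intro hle <;> linarith)
    rw [← hiih, hFcb]
  · left
    have hac' : a ∈ F r {a, c} := by
      obtain ⟨w, hw⟩ := hne {c, a} ⟨c, by simp⟩
      have hw' := hsub _ hw
      simp only [Finset.mem_insert, Finset.mem_singleton] at hw'
      rcases hw' with h | h
      · rw [h] at hw; exact absurd hw hca
      · rw [h] at hw; rwa [Finset.pair_comm a c]
    have hnc : c ∉ F r {a, c} := by rw [Finset.pair_comm a c]; exact hca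
    have hFac : F r {a, c} = {a} := aux_pair_eq _ hsub a c hac' hnc
    intro r' h1 h2
    have sgn : ∀ i, (r i a < r i c ∧ r' i a < r' i c) ∨
        (r i c < r i a ∧ r' i c < r' i a) := by
      intro i
      by_cases hi : i ∈ E1
      · left
        refine ⟨?_, h1 i hi⟩
        rw [v1a i hi, v1c i hi]; norm_num
      · right
        refine ⟨?_, h2 i hi⟩
        by_cases hi2 : i ∈ E2
        · rw [v2c i hi2, v2a i hi2]; norm_num
        · rw [v3c i hi hi2, v3a i hi hi2]; norm_num
    have hiih := hIIH r r' {a, c} ⟨a, by simp⟩ (by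
      intro i f hf g hg
      simp only [Finset.mem_insert, Finset.mem_singleton] at hf hg
      rcases sgn i with ⟨u, v⟩ | ⟨u, v⟩ <;> rcases hf with rfl | rfl <;>
        rcases hg with rfl | rfl <;> constructor <;> intro hle <;> linarith)
    rw [← hiih, hFac]

lemma dict_single {F : (Fin n → H → ℝ) → Finset H → Finset H} (i : Fin n)
    (hGD : GloballyDecisive F ({i} : Set (Fin n))) :
    ∀ r : Fin n → H → ℝ, ∀ f g : H, r i f < r i g → F r {f, g} = {f} := by
  intro r f g hfg
  by_cases hfg' : f = g
  · subst hfg'; exact absurd hfg (lt_irrefl _)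
  · exact hGD f g hfg' r (fun e he => by
      rw [Set.mem_singleton_iff] at he; subst he; exact hfg)

end ArrowAux

/-- **Impossibility theorem.** If the hypothesis space has at least three distinct
elements and there are at least three environments, then no aggregation rule `F`
assigns to every risk profile an internally consistent, nonempty-valued choice
correspondence while satisfying PO, IIH, IR, and CI simultaneously. -/
theorem impossibility_of_collective_intelligence [DecidableEq H] (n : ℕ) (hn : 3 ≤ n)
    (hH : ∃ f g h : H, f ≠ g ∧ f ≠ h ∧ g ≠ h) :
    ¬ ∃ F : (Fin n → H → ℝ) → Finset H → Finset H,
        IsChoiceCorrespondence F ∧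
        (∀ r : Fin n → H → ℝ, InternallyConsistent (F r)) ∧
        AxPO F ∧ AxIIH F ∧ AxIR F ∧ AxCI F := by
  rintro ⟨F, hCC, hIC, hPO, hIIH, _hIR, hCI⟩
  obtain ⟨a, b, c, hab, hac, hbc⟩ := hH
  have hthird : ∀ u v : H, ∃ w, w ≠ u ∧ w ≠ v := by
    intro u v
    by_cases h1 : a ≠ u ∧ a ≠ v
    · exact ⟨a, h1⟩
    by_cases h2 : b ≠ u ∧ b ≠ v
    · exact ⟨b, h2⟩
    by_cases h3 : c ≠ u ∧ c ≠ v
    · exact ⟨c, h3⟩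
    exfalso
    push_neg at h1 h2 h3
    have g1 : a = u ∨ a = v := by
      by_cases h : a = u
      · exact Or.inl h
      · exact Or.inr (h1 h)
    have g2 : b = u ∨ b = v := by
      by_cases h : b = u
      · exact Or.inl h
      · exact Or.inr (h2 h)
    have g3 : c = u ∨ c = v := by
      by_cases h : c = u
      · exact Or.inl h
      · exact Or.inr (h3 h)
    rcases g1 with rfl | rfl <;> rcases g2 with rfl | rfl <;>
      rcases g3 with rfl | rfl <;> simp_all
  have hmain : ∀ m : ℕ, ∀ E : Finset (Fin n), E.card ≤ m → E.Nonempty →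
      GloballyDecisive F (↑E : Set (Fin n)) →
      ∃ i : Fin n, ∀ r : Fin n → H → ℝ, ∀ f g : H, r i f < r i g →
        F r {f, g} = {f} := by
    intro m
    induction m with
    | zero =>
      intro E hc hne _
      have := Finset.card_pos.mpr hne
      omega
    | succ m ih =>
      intro E hc hne hGD
      obtain ⟨e, he⟩ := hne
      by_cases hE : E = {e}
      · refine ⟨e, dict_single e ?_⟩
        have hcoe : (↑E : Set (Fin n)) = {e} := by rw [hE]; simp
        rwa [hcoe] at hGD
      · have hE2 : (E.erase e).Nonempty := by
          rcases Finset.eq_empty_or_nonempty (E.erase e) with h | h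
          · exfalso
            rw [Finset.erase_eq_empty_iff] at h
            rcases h with h | h
            · rw [h] at he; exact absurd he (Finset.notMem_empty e)
            · exact hE h
          · exact h
        have hunion : (({e} : Set (Fin n)) ∪ ↑(E.erase e)) = (↑E : Set (Fin n)) := by
          ext i
          simp only [Set.mem_union, Set.mem_singleton_iff, Finset.coe_erase,
            Set.mem_diff, Finset.mem_coe, Set.mem_singleton_iff]
          constructor
          · rintro (rfl | ⟨hi, _⟩)
            · exact he
            · exact hi
          · intro hi
            by_cases h : i = e
            · exact Or.inl h
            · exact Or.inr ⟨hi, h⟩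
        have hGD' : GloballyDecisive F (({e} : Set (Fin n)) ∪ ↑(E.erase e)) := by
          rwa [hunion]
        have hdisj : ∀ i, i ∈ ({e} : Set (Fin n)) →
            i ∉ (↑(E.erase e) : Set (Fin n)) := by
          intro i hi hi'
          rw [Set.mem_singleton_iff] at hi
          subst hi
          simp at hi'
        rcases contraction hCC hIC hIIH hab hac hbc _ _ hdisj hGD' with h1 | h2
        · exact ⟨e, dict_single e (expand hCC hIC hPO hIIH hthird hac h1)⟩
        · have hGDe : GloballyDecisive F (↑(E.erase e) : Set (Fin n)) :=
            expand hCC hIC hPO hIIH hthird (Ne.symm hbc) h2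
          have hcard : (E.erase e).card ≤ m := by
            have := Finset.card_erase_of_mem he
            omega
          exact ih (E.erase e) hcard hE2 hGDe
  have hGDuniv : GloballyDecisive F (↑(Finset.univ : Finset (Fin n))) := by
    intro f g hfg r hall
    exact hPO r f g (fun i => hall i (by simp))
  have hnonempty : Nonempty (Fin n) := ⟨⟨0, by omega⟩⟩
  obtain ⟨i, hi⟩ := hmain n Finset.univ (by simp) Finset.univ_nonempty hGDuniv
  exact hCI ⟨i, hi⟩
end

section
/- Let 𝔸 be a choice correspondence on a collection ℬ of nonempty subsets of ℋ, where ℬ contains every subset of 𝒰 := ⋃_{𝓗 ∈ ℬ} 𝓗 with one, two, or three elements, 𝔸(𝓗) is nonempty for every 𝓗 ∈ ℬ, and 𝔸 is internally consistent. Define the revealed preference relation ⪰ on 𝒰 by f ⪰ g if and only if f ∈ 𝔸({f,g}). Then for every 𝓗 ∈ ℬ, 𝔸(𝓗) = {h ∈ 𝓗 : h ⪰ g for all g ∈ 𝓗}; that is, 𝔸 is represented by maximization of its revealed preference on one- and two-element subsets. -/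
variable {H : Type*}

/-- Internal consistency (α and β properties) of a choice correspondence `A`
defined on a collection `B` of subsets of the hypothesis space. -/
def SetInternallyConsistent (B : Set (Set H)) (A : Set H → Set H) : Prop :=
  (∀ 𝓕 ∈ B, ∀ 𝓖 ∈ B, 𝓖 ⊆ 𝓕 → ∀ h : H, h ∈ A 𝓕 → h ∈ 𝓖 → h ∈ A 𝓖) ∧
  (∀ 𝓕 ∈ B, ∀ 𝓖 ∈ B, 𝓖 ⊆ 𝓕 → ∀ h : H, h ∈ 𝓖 → h ∈ A 𝓕 → A 𝓖 ⊆ A 𝓕)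

/-- `B` contains every one-, two-, and three-element subset of `⋃₀ B`. -/
def ContainsSmallSubsets (B : Set (Set H)) : Prop :=
  (∀ f ∈ ⋃₀ B, ({f} : Set H) ∈ B) ∧
  (∀ f ∈ ⋃₀ B, ∀ g ∈ ⋃₀ B, ({f, g} : Set H) ∈ B) ∧
  (∀ f ∈ ⋃₀ B, ∀ g ∈ ⋃₀ B, ∀ h ∈ ⋃₀ B, ({f, g, h} : Set H) ∈ B)

/-- **Proposition (revealed preference, part 2).** An internally consistent,
nonempty-valued choice correspondence is represented by maximization of its
revealed preference `f ⪰ g ↔ f ∈ 𝔸({f, g})` on one- and two-element subsets. -/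
theorem choice_eq_revealedPreference_maximization
    (B : Set (Set H)) (A : Set H → Set H)
    (hBne : ∀ S ∈ B, S.Nonempty)
    (hsub : ∀ S ∈ B, A S ⊆ S)
    (hne : ∀ S ∈ B, (A S).Nonempty)
    (hsmall : ContainsSmallSubsets B)
    (hic : SetInternallyConsistent B A) :
    ∀ S ∈ B, A S = {h | h ∈ S ∧ ∀ g ∈ S, h ∈ A {h, g}} := by
  obtain ⟨halpha, hbeta⟩ := hic
  obtain ⟨h1, h2, h3⟩ := hsmall
  intro S hS
  have hU : ∀ x ∈ S, x ∈ ⋃₀ B := fun x hx => ⟨S, hS, hx⟩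
  ext h
  constructor
  · intro hh
    have hhS : h ∈ S := hsub S hS hh
    refine ⟨hhS, fun g hg => ?_⟩
    have hpair : ({h, g} : Set H) ∈ B := h2 h (hU h hhS) g (hU g hg)
    exact halpha S hS {h, g} hpair (by intro x hx; rcases hx with rfl | rfl
                                       exacts [hhS, hg]) h hh (by left; rfl)
  · rintro ⟨hhS, hmax⟩
    obtain ⟨k, hk⟩ := hne S hS
    have hkS : k ∈ S := hsub S hS hk
    have hpair : ({h, k} : Set H) ∈ B := h2 h (hU h hhS) k (hU k hkS)
    have hsubS : ({h, k} : Set H) ⊆ S := by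
      intro x hx; rcases hx with rfl | rfl; exacts [hhS, hkS]
    have hkp : k ∈ A {h, k} := halpha S hS {h, k} hpair hsubS k hk (by right; rfl)
    exact hbeta S hS {h, k} hpair hsubS k (by right; rfl) hk (hmax k hkS)
end

section
/- Suppose the hypothesis space ℋ contains at least three distinct elements, and let F be an aggregation rule such that for every risk profile r the choice correspondence F(r) is nonempty-valued on every finite nonempty subset of ℋ and internally consistent, and F satisfies Pareto Optimality (PO) and Independence of Irrelevant Hypotheses (IIH). If a set of environments E is locally decisive over some ordered pair (f,g) of distinct hypotheses, then E is globally decisive, i.e., E is locally decisive over every ordered pair of distinct hypotheses. -/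
variable {H : Type*}

section DecisiveAux

open Classical in
lemma key_chain_aux [DecidableEq H]
    (A : Finset H → Finset H)
    (hsub : ∀ S : Finset H, A S ⊆ S)
    (hne : ∀ S : Finset H, S.Nonempty → (A S).Nonempty)
    (hic : InternallyConsistent A)
    (a b c : H) (hab : a ≠ b) (hac : a ≠ c) (hbc : b ≠ c)
    (h1 : A {a, b} = {a}) (h2 : A {b, c} = {b}) :
    A {a, c} = {a} := by
  obtain ⟨hα, hβ⟩ := hic
  have hsub1 : ({a, b} : Finset H) ⊆ {a, b, c} := by intro x; simp; tauto
  have hsub2 : ({b, c} : Finset H) ⊆ {a, b, c} := by intro x; simp; tauto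
  have hsub3 : ({a, c} : Finset H) ⊆ {a, b, c} := by intro x; simp; tauto
  have hbT : b ∉ A {a, b, c} := by
    intro hb
    have := hα _ {a, b} hsub1 b hb (by simp)
    rw [h1] at this; simp at this; exact hab this.symm
  have hcT : c ∉ A {a, b, c} := by
    intro hc
    have := hα _ {b, c} hsub2 c hc (by simp)
    rw [h2] at this; simp at this; exact hbc this.symm
  have hTa : A {a, b, c} = {a} := by
    have hsubs : A {a, b, c} ⊆ {a} := by
      intro x hx
      have hxT := hsub _ hx
      simp at hxT ⊢
      rcases hxT with rfl | rfl | rfl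
      · rfl
      · exact absurd hx hbT
      · exact absurd hx hcT
    rcases Finset.subset_singleton_iff.mp hsubs with h | h
    · exact absurd h (Finset.nonempty_iff_ne_empty.mp (hne _ ⟨a, by simp⟩))
    · exact h
  have haT : a ∈ A {a, b, c} := by rw [hTa]; simp
  have hs : A {a, c} ⊆ {a} := by
    rw [← hTa]; exact hβ _ {a, c} hsub3 a (by simp) haT
  rcases Finset.subset_singleton_iff.mp hs with h | h
  · exact absurd h (Finset.nonempty_iff_ne_empty.mp (hne _ ⟨a, by simp⟩))
  · exact h

/-- Spread decisiveness from pair (f,g) to (f,h). -/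
lemma decisive_stepA [DecidableEq H] {n : ℕ}
    (F : (Fin n → H → ℝ) → Finset H → Finset H)
    (hcc : IsChoiceCorrespondence F)
    (hic : ∀ r : Fin n → H → ℝ, InternallyConsistent (F r))
    (hPO : AxPO F) (hIIH : AxIIH F)
    (E : Set (Fin n)) (f g : H) (hfg : f ≠ g)
    (hdec : LocallyDecisive F E f g)
    (h : H) (hhf : h ≠ f) (hhg : h ≠ g) :
    LocallyDecisive F E f h := by
  classical
  intro r hr
  set r' : Fin n → H → ℝ := fun i x =>
    if x = g then (if i ∈ E then (r i f + r i h) / 2 else min (r i f) (r i h) - 1)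
    else r i x with hr'def
  have hrf : ∀ i, r' i f = r i f := fun i => if_neg hfg
  have hrh : ∀ i, r' i h = r i h := fun i => if_neg hhg
  have h1 : F r' {f, g} = {f} := by
    apply hdec r'
    intro e he
    have hfh := hr e he
    rw [hrf]
    simp only [hr'def, if_pos rfl, if_pos he]
    linarith
  have h2 : F r' {g, h} = {g} := by
    apply hPO r' g h
    intro i
    rw [hrh]
    simp only [hr'def, if_pos rfl]
    by_cases hi : i ∈ E
    · rw [if_pos hi]
      have hfh := hr i hi
      linarith
    · rw [if_neg hi]
      have := min_le_right (r i f) (r i h)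
      linarith
  have h3 : F r' {f, h} = {f} :=
    key_chain_aux (F r') (hcc r').1 (hcc r').2 (hic r') f g h hfg
      (Ne.symm hhf) (Ne.symm hhg) h1 h2
  have h4 : F r {f, h} = F r' {f, h} := by
    apply hIIH r r' {f, h} ⟨f, by simp⟩
    intro i x hx y hy
    have hag : ∀ z ∈ ({f, h} : Finset H), r' i z = r i z := by
      intro z hz
      simp at hz
      rcases hz with rfl | rfl
      · exact hrf i
      · exact hrh i
    rw [hag x hx, hag y hy]
  rw [h4, h3]

/-- Spread decisiveness from pair (f,g) to (h,g). -/
lemma decisive_stepB [DecidableEq H] {n : ℕ}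
    (F : (Fin n → H → ℝ) → Finset H → Finset H)
    (hcc : IsChoiceCorrespondence F)
    (hic : ∀ r : Fin n → H → ℝ, InternallyConsistent (F r))
    (hPO : AxPO F) (hIIH : AxIIH F)
    (E : Set (Fin n)) (f g : H) (hfg : f ≠ g)
    (hdec : LocallyDecisive F E f g)
    (h : H) (hhf : h ≠ f) (hhg : h ≠ g) :
    LocallyDecisive F E h g := by
  classical
  intro r hr
  set r' : Fin n → H → ℝ := fun i x =>
    if x = f then (if i ∈ E then (r i h + r i g) / 2 else max (r i h) (r i g) + 1)
    else r i x with hr'def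
  have hrh : ∀ i, r' i h = r i h := fun i => if_neg hhf
  have hrg : ∀ i, r' i g = r i g := fun i => if_neg (Ne.symm hfg)
  have h1 : F r' {h, f} = {h} := by
    apply hPO r' h f
    intro i
    rw [hrh]
    simp only [hr'def, if_pos rfl]
    by_cases hi : i ∈ E
    · rw [if_pos hi]
      have hhg' := hr i hi
      linarith
    · rw [if_neg hi]
      have := le_max_left (r i h) (r i g)
      linarith
  have h2 : F r' {f, g} = {f} := by
    apply hdec r'
    intro e he
    have hhg' := hr e he
    rw [hrg]
    simp only [hr'def, if_pos rfl, if_pos he]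
    linarith
  have h3 : F r' {h, g} = {h} :=
    key_chain_aux (F r') (hcc r').1 (hcc r').2 (hic r') h f g hhf hhg hfg h1 h2
  have h4 : F r {h, g} = F r' {h, g} := by
    apply hIIH r r' {h, g} ⟨h, by simp⟩
    intro i x hx y hy
    have hag : ∀ z ∈ ({h, g} : Finset H), r' i z = r i z := by
      intro z hz
      simp at hz
      rcases hz with rfl | rfl
      · exact hrh i
      · exact hrg i
    rw [hag x hx, hag y hy]
  rw [h4, h3]

end DecisiveAux

/-- **Lemma (spread of decisiveness).** Under PO and IIH, if a set of environments is
locally decisive over some ordered pair of distinct hypotheses, it is globally decisive. -/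
theorem decisive_spreadness [DecidableEq H] (n : ℕ)
    (hH : ∃ f g h : H, f ≠ g ∧ f ≠ h ∧ g ≠ h)
    (F : (Fin n → H → ℝ) → Finset H → Finset H)
    (hcc : IsChoiceCorrespondence F)
    (hic : ∀ r : Fin n → H → ℝ, InternallyConsistent (F r))
    (hPO : AxPO F) (hIIH : AxIIH F)
    (E : Set (Fin n)) (f g : H) (hfg : f ≠ g)
    (hdec : LocallyDecisive F E f g) :
    GloballyDecisive F E := by
  classical
  -- a "third element" chooser
  obtain ⟨a, b, c, hab, hac, hbc⟩ := hH
  have third : ∀ u v : H, ∃ w : H, w ≠ u ∧ w ≠ v := by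
    intro u v
    by_cases h1 : a = u ∨ a = v
    · by_cases h2 : b = u ∨ b = v
      · refine ⟨c, ?_, ?_⟩ <;>
          (rcases h1 with rfl | rfl <;> rcases h2 with rfl | rfl <;>
            first
              | exact absurd rfl hab
              | exact Ne.symm hac
              | exact Ne.symm hbc)
      · push_neg at h2; exact ⟨b, h2⟩
    · push_neg at h1; exact ⟨a, h1⟩
  -- decisive over (f, y) for any y ≠ f
  have Dfy : ∀ y : H, y ≠ f → LocallyDecisive F E f y := by
    intro y hyf
    by_cases hyg : y = g
    · subst hyg; exact hdec
    · exact decisive_stepA F hcc hic hPO hIIH E f g hfg hdec y hyf hyg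
  -- decisive over (x, y) when x ≠ f, y ≠ f, x ≠ y
  have Dxy : ∀ x y : H, x ≠ f → y ≠ f → x ≠ y → LocallyDecisive F E x y := by
    intro x y hxf hyf hxy
    exact decisive_stepB F hcc hic hPO hIIH E f y (Ne.symm hyf) (Dfy y hyf) x hxf hxy
  intro x y hxy
  by_cases hxf : x = f
  · subst hxf
    exact Dfy y (Ne.symm hxy)
  · by_cases hyf : y = f
    · rw [hyf]
      obtain ⟨z, hzx, hzf⟩ := third x f
      have Dxz : LocallyDecisive F E x z :=
        Dxy x z hxf hzf (Ne.symm hzx)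
      exact decisive_stepA F hcc hic hPO hIIH E x z (Ne.symm hzx) Dxz f
        (fun h => hxf h.symm) (fun h => hzf h.symm)
    · exact Dxy x y hxf hyf hxy
end

section
/- Suppose the hypothesis space ℋ contains at least three distinct elements and the number of environments n satisfies n ≥ 3, and let F be an aggregation rule such that for every risk profile r the choice correspondence F(r) is nonempty-valued on every finite nonempty subset of ℋ and internally consistent, and F satisfies Pareto Optimality (PO) and Independence of Irrelevant Hypotheses (IIH). If a set E of environments containing more than one element is globally decisive, then some nonempty proper subset of E is also globally decisive. -/
variable {H : Type*}

section Aux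
variable [DecidableEq H] {n : ℕ} {F : (Fin n → H → ℝ) → Finset H → Finset H}

lemma pair_resolve (hcc : IsChoiceCorrespondence F) (r : Fin n → H → ℝ) (x z : H)
    (hz : z ∉ F r ({x, z} : Finset H)) : F r ({x, z} : Finset H) = {x} := by
  obtain ⟨w, hw⟩ := (hcc r).2 {x, z} ⟨x, by simp⟩
  have hsub := (hcc r).1 ({x, z} : Finset H)
  have hwx : w = x := by
    have hm := hsub hw
    simp only [Finset.mem_insert, Finset.mem_singleton] at hm
    rcases hm with rfl | rfl
    · rfl
    · exact absurd hw hz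
  subst hwx
  apply Finset.Subset.antisymm
  · intro a ha
    have hm := hsub ha
    simp only [Finset.mem_insert, Finset.mem_singleton] at hm ⊢
    rcases hm with rfl | rfl
    · rfl
    · exact absurd ha hz
  · intro a ha
    simp only [Finset.mem_singleton] at ha
    subst ha; exact hw

lemma choice_trans (hcc : IsChoiceCorrespondence F) (hic : ∀ r, InternallyConsistent (F r))
    (r : Fin n → H → ℝ) (x y z : H) (hxy : x ≠ y) (hyz : y ≠ z) (hxz : x ≠ z)
    (h1 : F r {x, y} = {x}) (h2 : y ∈ F r {y, z}) : F r {x, z} = {x} := by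
  have hα := (hic r).1
  have hβ := (hic r).2
  have hsub := (hcc r).1
  set T : Finset H := {x, y, z} with hT
  have hxyT : ({x, y} : Finset H) ⊆ T := by intro w hw; simp [hT] at hw ⊢; tauto
  have hyzT : ({y, z} : Finset H) ⊆ T := by intro w hw; simp [hT] at hw ⊢; tauto
  have hxzT : ({x, z} : Finset H) ⊆ T := by intro w hw; simp [hT] at hw ⊢; tauto
  have hyT : y ∉ F r T := by
    intro hy
    have := hα T {x, y} hxyT y hy (by simp)
    rw [h1] at this
    simp only [Finset.mem_singleton] at this
    exact hxy this.symm
  have hzT : z ∉ F r T := by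
    intro hz
    exact hyT (hβ T {y, z} hyzT z (by simp) hz h2)
  obtain ⟨w, hw⟩ := (hcc r).2 T ⟨x, by simp [hT]⟩
  have hwx : w = x := by
    have hm := hsub T hw
    rw [hT] at hm
    simp only [Finset.mem_insert, Finset.mem_singleton] at hm
    rcases hm with rfl | rfl | rfl
    · rfl
    · exact absurd hw hyT
    · exact absurd hw hzT
  rw [hwx] at hw
  have hznot : z ∉ F r {x, z} := by
    intro hz
    exact hzT (hβ T {x, z} hxzT x (by simp) hw hz)
  exact pair_resolve hcc r x z hznot

lemma strict_iff {u v u' v' : ℝ} (h1 : u < v) (h2 : u' < v') :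
    (u ≤ v ↔ u' ≤ v') ∧ (v ≤ u ↔ v' ≤ u') :=
  ⟨iff_of_true h1.le h2.le, iff_of_false (not_le.2 h1) (not_le.2 h2)⟩

lemma pair_IIH (hIIH : AxIIH F) (r r' : Fin n → H → ℝ) (a c : H)
    (hcond : ∀ i, (r i a ≤ r i c ↔ r' i a ≤ r' i c) ∧ (r i c ≤ r i a ↔ r' i c ≤ r' i a)) :
    F r {a, c} = F r' {a, c} := by
  apply hIIH r r' {a, c} ⟨a, by simp⟩
  intro i u hu v hv
  simp only [Finset.mem_insert, Finset.mem_singleton] at hu hv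
  rcases hu with rfl | rfl <;> rcases hv with rfl | rfl
  · simp
  · exact (hcond i).1
  · exact (hcond i).2
  · simp

end Aux

section FE
variable [DecidableEq H] {n : ℕ} {F : (Fin n → H → ℝ) → Finset H → Finset H}

lemma field_expansion (hcc : IsChoiceCorrespondence F) (hic : ∀ r, InternallyConsistent (F r))
    (hPO : AxPO F) (hIIH : AxIIH F)
    (hH : ∃ f g h : H, f ≠ g ∧ f ≠ h ∧ g ≠ h)
    (E' : Set (Fin n)) (x y : H) (hxy : x ≠ y)
    (hAD : ∀ r : Fin n → H → ℝ, (∀ e ∈ E', r e x < r e y) → (∀ j, j ∉ E' → r j y < r j x) →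
      F r {x, y} = {x}) :
    ∀ f g : H, f ≠ g → ∀ r : Fin n → H → ℝ, (∀ e ∈ E', r e f < r e g) → F r {f, g} = {f} := by
  classical
  have third : ∀ a b : H, ∃ c : H, c ≠ a ∧ c ≠ b := by
    intro a b
    obtain ⟨p, q, s, hpq, hps, hqs⟩ := hH
    by_cases hp : p ≠ a ∧ p ≠ b
    · exact ⟨p, hp⟩
    by_cases hq : q ≠ a ∧ q ≠ b
    · exact ⟨q, hq⟩
    push_neg at hp hq
    refine ⟨s, ?_, ?_⟩
    · intro h
      subst h
      have hpb : p = b := hp hps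
      have hqb : q = b := hq hqs
      exact hpq (hpb.trans hqb.symm)
    · intro h
      subst h
      have hpa : p = a := by
        by_contra hpa
        exact hps (hp hpa)
      have hqa : q = a := by
        by_contra hqa
        exact hqs (hq hqa)
      exact hpq (hpa.trans hqa.symm)
  have step1 : ∀ a b : H, a ≠ b →
      (∀ r : Fin n → H → ℝ, (∀ e ∈ E', r e a < r e b) → (∀ j, j ∉ E' → r j b < r j a) →
        F r {a, b} = {a}) →
      ∀ c : H, c ≠ a → c ≠ b →
      ∀ r : Fin n → H → ℝ, (∀ e ∈ E', r e a < r e c) → F r {a, c} = {a} := by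
    intro a b hab hADab c hca hcb r hr
    set r' : Fin n → H → ℝ := fun i t =>
      if i ∈ E' then (if t = a then 0 else if t = b then 1 else if t = c then 2 else 3)
      else (if t = b then min (r i a) (r i c) - 1 else if t = a then r i a
            else if t = c then r i c else 0) with hr'
    have hEa : ∀ e ∈ E', r' e a = 0 := fun e he => by simp [hr', he]
    have hEb : ∀ e ∈ E', r' e b = 1 := fun e he => by simp [hr', he, Ne.symm hab]
    have hEc : ∀ e ∈ E', r' e c = 2 := fun e he => by simp [hr', he, hca, hcb]
    have hOb : ∀ j, j ∉ E' → r' j b = min (r j a) (r j c) - 1 := fun j hj => by simp [hr', hj]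
    have hOa : ∀ j, j ∉ E' → r' j a = r j a := fun j hj => by simp [hr', hj, hab]
    have hOc : ∀ j, j ∉ E' → r' j c = r j c := fun j hj => by
      simp [hr', hj, hcb, hca]
    have h1 : F r' {a, b} = {a} := by
      refine hADab r' (fun e he => ?_) (fun j hj => ?_)
      · rw [hEa e he, hEb e he]; norm_num
      · rw [hOb j hj, hOa j hj]
        have := min_le_left (r j a) (r j c); linarith
    have h2 : F r' {b, c} = {b} := by
      refine hPO r' b c (fun i => ?_)
      by_cases hi : i ∈ E'
      · rw [hEb i hi, hEc i hi]; norm_num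
      · rw [hOb i hi, hOc i hi]
        have := min_le_right (r i a) (r i c); linarith
    have h3 : F r' {a, c} = {a} :=
      choice_trans hcc hic r' a b c hab (Ne.symm hcb) (Ne.symm hca) h1 (by rw [h2]; simp)
    rw [pair_IIH hIIH r r' a c (fun i => ?_)]
    · exact h3
    by_cases hi : i ∈ E'
    · rw [hEa i hi, hEc i hi]
      exact strict_iff (hr i hi) (by norm_num)
    · rw [hOa i hi, hOc i hi]
      exact ⟨Iff.rfl, Iff.rfl⟩
  have step2 : ∀ a b : H, a ≠ b →
      (∀ r : Fin n → H → ℝ, (∀ e ∈ E', r e a < r e b) → (∀ j, j ∉ E' → r j b < r j a) →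
        F r {a, b} = {a}) →
      ∀ c : H, c ≠ a → c ≠ b →
      ∀ r : Fin n → H → ℝ, (∀ e ∈ E', r e c < r e b) → F r {c, b} = {c} := by
    intro a b hab hADab c hca hcb r hr
    set r' : Fin n → H → ℝ := fun i t =>
      if i ∈ E' then (if t = c then 0 else if t = a then 1 else if t = b then 2 else 3)
      else (if t = a then max (r i c) (r i b) + 1 else if t = c then r i c
            else if t = b then r i b else 0) with hr'
    have hEc : ∀ e ∈ E', r' e c = 0 := fun e he => by simp [hr', he]
    have hEa : ∀ e ∈ E', r' e a = 1 := fun e he => by simp [hr', he, Ne.symm hca]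
    have hEb : ∀ e ∈ E', r' e b = 2 := fun e he => by simp [hr', he, Ne.symm hcb, Ne.symm hab]
    have hOa : ∀ j, j ∉ E' → r' j a = max (r j c) (r j b) + 1 := fun j hj => by simp [hr', hj]
    have hOc : ∀ j, j ∉ E' → r' j c = r j c := fun j hj => by simp [hr', hj, hca]
    have hOb : ∀ j, j ∉ E' → r' j b = r j b := fun j hj => by
      simp [hr', hj, Ne.symm hab, Ne.symm hcb]
    have h1 : F r' {c, a} = {c} := by
      refine hPO r' c a (fun i => ?_)
      by_cases hi : i ∈ E'
      · rw [hEc i hi, hEa i hi]; norm_num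
      · rw [hOc i hi, hOa i hi]
        have := le_max_left (r i c) (r i b); linarith
    have h2 : F r' {a, b} = {a} := by
      refine hADab r' (fun e he => ?_) (fun j hj => ?_)
      · rw [hEa e he, hEb e he]; norm_num
      · rw [hOb j hj, hOa j hj]
        have := le_max_right (r j c) (r j b); linarith
    have h3 : F r' {c, b} = {c} :=
      choice_trans hcc hic r' c a b hca hab hcb h1 (by rw [h2]; simp)
    rw [pair_IIH hIIH r r' c b (fun i => ?_)]
    · exact h3
    by_cases hi : i ∈ E'
    · rw [hEc i hi, hEb i hi]
      exact strict_iff (hr i hi) (by norm_num)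
    · rw [hOc i hi, hOb i hi]
      exact ⟨Iff.rfl, Iff.rfl⟩
  have claim1 : ∀ b : H, b ≠ x →
      ∀ r : Fin n → H → ℝ, (∀ e ∈ E', r e x < r e b) → F r {x, b} = {x} := by
    intro b hbx
    by_cases hby : b = y
    · subst hby
      obtain ⟨c, hcx, hcy⟩ := third x b
      have l1 := step1 x b hxy hAD c hcx hcy
      exact step1 x c (Ne.symm hcx) (fun r h1 _ => l1 r h1) b hbx (Ne.symm hcy)
    · exact step1 x y hxy hAD b hbx hby
  have claim2 : ∀ a : H, a ≠ x →
      ∀ r : Fin n → H → ℝ, (∀ e ∈ E', r e a < r e x) → F r {a, x} = {a} := by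
    intro a hax
    by_cases hay : a = y
    · subst hay
      obtain ⟨c, hcx, hca⟩ := third x a
      have l2 := step2 x a hxy hAD c hcx hca
      have l3 := step1 c a hca (fun r h1 _ => l2 r h1) x (Ne.symm hcx) (Ne.symm hax)
      exact step2 c x hcx (fun r h1 _ => l3 r h1) a (Ne.symm hca) hax
    · have l2 := step2 x y hxy hAD a hax hay
      exact step1 a y hay (fun r h1 _ => l2 r h1) x (Ne.symm hax) hxy
  intro a b hab
  by_cases hax : a = x
  · subst hax
    exact claim1 b (Ne.symm hab)
  · by_cases hbx : b = x
    · subst hbx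
      exact claim2 a hax
    · have hADxb : ∀ r : Fin n → H → ℝ, (∀ e ∈ E', r e x < r e b) →
          (∀ j, j ∉ E' → r j b < r j x) → F r {x, b} = {x} :=
        fun r h1 _ => claim1 b hbx r h1
      exact step2 x b (Ne.symm hbx) hADxb a hax hab

end FE

/-- **Lemma (contraction of decisive sets).** Under PO and IIH, any globally decisive set
of environments with more than one element has a nonempty proper subset that is also
globally decisive. -/
theorem decisive_contraction [DecidableEq H] (n : ℕ) (hn : 3 ≤ n)
    (hH : ∃ f g h : H, f ≠ g ∧ f ≠ h ∧ g ≠ h)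
    (F : (Fin n → H → ℝ) → Finset H → Finset H)
    (hcc : IsChoiceCorrespondence F)
    (hic : ∀ r : Fin n → H → ℝ, InternallyConsistent (F r))
    (hPO : AxPO F) (hIIH : AxIIH F)
    (E : Set (Fin n)) (hE : ∃ e₁ ∈ E, ∃ e₂ ∈ E, e₁ ≠ e₂)
    (hdec : GloballyDecisive F E) :
    ∃ E' : Set (Fin n), E'.Nonempty ∧ E' ⊂ E ∧ GloballyDecisive F E' := by
  classical
  obtain ⟨e₁, he₁, e₂, he₂, hne⟩ := hE
  obtain ⟨f, g, h, hfg, hfh, hgh⟩ := hH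
  set r : Fin n → H → ℝ := fun i t =>
    if i = e₁ then (if t = f then 0 else if t = g then 1 else if t = h then 2 else 3)
    else if i ∈ E then (if t = g then 0 else if t = h then 1 else if t = f then 2 else 3)
    else (if t = h then 0 else if t = f then 1 else if t = g then 2 else 3) with hr
  -- values at e₁
  have h1f : r e₁ f = 0 := by simp [hr]
  have h1g : r e₁ g = 1 := by simp [hr, Ne.symm hfg]
  have h1h : r e₁ h = 2 := by simp [hr, Ne.symm hfh, Ne.symm hgh]
  -- values on E \ {e₁}
  have h2g : ∀ i, i ≠ e₁ → i ∈ E → r i g = 0 := fun i hi hiE => by simp [hr, hi, hiE]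
  have h2h : ∀ i, i ≠ e₁ → i ∈ E → r i h = 1 := fun i hi hiE => by
    simp [hr, hi, hiE, Ne.symm hgh]
  have h2f : ∀ i, i ≠ e₁ → i ∈ E → r i f = 2 := fun i hi hiE => by
    simp [hr, hi, hiE, hfg, hfh]
  -- values outside E
  have hnotE : ∀ i, i ∉ E → i ≠ e₁ := fun i hi hieq => hi (hieq ▸ he₁)
  have h3h : ∀ i, i ∉ E → r i h = 0 := fun i hi => by simp [hr, hi, hnotE i hi]
  have h3f : ∀ i, i ∉ E → r i f = 1 := fun i hi => by simp [hr, hi, hnotE i hi, hfh]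
  have h3g : ∀ i, i ∉ E → r i g = 2 := fun i hi => by
    simp [hr, hi, hnotE i hi, hgh, Ne.symm hfg]
  -- E decisive over (g, h) applies
  have hgPh : F r {g, h} = {g} := by
    refine hdec g h hgh r (fun e heE => ?_)
    by_cases he : e = e₁
    · subst he; rw [h1g, h1h]; norm_num
    · rw [h2g e he heE, h2h e he heE]; norm_num
  by_cases hcase : h ∈ F r {f, h}
  · -- contraction to E \ {e₁}
    have hgPf : F r {g, f} = {g} := by
      refine choice_trans hcc hic r g h f hgh (Ne.symm hfh) (Ne.symm hfg) hgPh ?_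
      rw [show ({h, f} : Finset H) = {f, h} from Finset.pair_comm h f]
      exact hcase
    have hAD : ∀ r'' : Fin n → H → ℝ, (∀ e ∈ E \ {e₁}, r'' e g < r'' e f) →
        (∀ j, j ∉ E \ {e₁} → r'' j f < r'' j g) → F r'' {g, f} = {g} := by
      intro r'' hp1 hp2
      rw [pair_IIH hIIH r'' r g f (fun i => ?_)]
      · exact hgPf
      by_cases hi : i ∈ E \ {e₁}
      · obtain ⟨hiE, hine⟩ := hi
        simp only [Set.mem_singleton_iff] at hine
        refine strict_iff (hp1 i ⟨hiE, hine⟩) ?_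
        rw [h2g i hine hiE, h2f i hine hiE]; norm_num
      · have hs := hp2 i hi
        have hrs : r i f < r i g := by
          by_cases hie : i = e₁
          · subst hie; rw [h1f, h1g]; norm_num
          · have hiE : i ∉ E := fun hiE => hi ⟨hiE, by simpa using hie⟩
            rw [h3f i hiE, h3g i hiE]; norm_num
        exact ⟨(strict_iff hs hrs).2, (strict_iff hs hrs).1⟩
    refine ⟨E \ {e₁}, ⟨e₂, he₂, by simpa using Ne.symm hne⟩, ?_, ?_⟩
    · refine Set.ssubset_iff_subset_ne.mpr ⟨Set.diff_subset, fun hEq => ?_⟩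
      have : e₁ ∈ E \ {e₁} := by rw [hEq]; exact he₁
      simp at this
    · exact field_expansion hcc hic hPO hIIH ⟨f, g, h, hfg, hfh, hgh⟩ (E \ {e₁}) g f
        (Ne.symm hfg) hAD
  · -- contraction to {e₁}
    have hfPh : F r {f, h} = {f} := pair_resolve hcc r f h hcase
    have hAD : ∀ r'' : Fin n → H → ℝ, (∀ e ∈ ({e₁} : Set (Fin n)), r'' e f < r'' e h) →
        (∀ j, j ∉ ({e₁} : Set (Fin n)) → r'' j h < r'' j f) → F r'' {f, h} = {f} := by
      intro r'' hp1 hp2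
      rw [pair_IIH hIIH r'' r f h (fun i => ?_)]
      · exact hfPh
      by_cases hi : i = e₁
      · subst hi
        refine strict_iff (hp1 i rfl) ?_
        rw [h1f, h1h]; norm_num
      · have hs := hp2 i (by simpa using hi)
        have hrs : r i h < r i f := by
          by_cases hiE : i ∈ E
          · rw [h2h i hi hiE, h2f i hi hiE]; norm_num
          · rw [h3h i hiE, h3f i hiE]; norm_num
        exact ⟨(strict_iff hs hrs).2, (strict_iff hs hrs).1⟩
    refine ⟨{e₁}, ⟨e₁, rfl⟩, ?_, ?_⟩
    · refine Set.ssubset_iff_subset_ne.mpr ⟨Set.singleton_subset_iff.mpr he₁, fun hEq => ?_⟩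
      have : e₂ ∈ ({e₁} : Set (Fin n)) := by rw [hEq]; exact he₂
      simp at this
      exact hne this.symm
    · exact field_expansion hcc hic hPO hIIH ⟨f, g, h, hfg, hfh, hgh⟩ {e₁} f h hfh hAD
end

section
/- Suppose the hypothesis space ℋ contains at least three distinct elements and the number of environments n satisfies n ≥ 3. If an aggregation rule F is such that for every risk profile r the choice correspondence F(r) is nonempty-valued on every finite nonempty subset of ℋ and internally consistent, and F satisfies Pareto Optimality (PO), Independence of Irrelevant Hypotheses (IIH), and Invariance Restriction (IR), then there exists a single environment i whose singleton {i} is globally decisive: for every risk profile r and all distinct f, g ∈ ℋ, r_i(f) < r_i(g) implies F(r)({f,g}) = {f}. In particular, F violates Collective Intelligence (CI). -/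
variable {H : Type*}

section Aux
variable {n : ℕ} [DecidableEq H]

/-- Base (revealed weak preference) relation. -/
def Rb (F : (Fin n → H → ℝ) → Finset H → Finset H) (r : Fin n → H → ℝ) (f g : H) : Prop :=
  f ∈ F r ({f, g} : Finset H)

lemma Rb_total {F : (Fin n → H → ℝ) → Finset H → Finset H}
    (hcc : IsChoiceCorrespondence F) (r : Fin n → H → ℝ) (f g : H) :
    Rb F r f g ∨ Rb F r g f := by
  obtain ⟨hsub, hne⟩ := hcc r
  obtain ⟨x, hx⟩ := hne {f, g} ⟨f, by simp⟩
  have hx2 := hsub {f, g} hx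
  simp only [Finset.mem_insert, Finset.mem_singleton] at hx2
  rcases hx2 with rfl | rfl
  · exact Or.inl hx
  · right
    show x ∈ F r ({x, f} : Finset H)
    rwa [Finset.pair_comm]

lemma Rb_trans {F : (Fin n → H → ℝ) → Finset H → Finset H}
    (hcc : IsChoiceCorrespondence F) (hic : ∀ r, InternallyConsistent (F r))
    (r : Fin n → H → ℝ) {f g h : H}
    (hfg : Rb F r f g) (hgh : Rb F r g h) : Rb F r f h := by
  obtain ⟨ha, hb⟩ := hic r
  obtain ⟨hsub, hne⟩ := hcc r
  have hfgT : ({f, g} : Finset H) ⊆ {f, g, h} := by intro x; simp; tauto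
  have hghT : ({g, h} : Finset H) ⊆ {f, g, h} := by intro x; simp; tauto
  have hfhT : ({f, h} : Finset H) ⊆ {f, g, h} := by intro x; simp; tauto
  have hgcase : g ∈ F r ({f, g, h} : Finset H) → f ∈ F r ({f, g, h} : Finset H) := fun hg =>
    hb ({f, g, h} : Finset H) ({f, g} : Finset H) hfgT g (by simp) hg hfg
  have key : f ∈ F r ({f, g, h} : Finset H) := by
    obtain ⟨x, hx⟩ := hne {f, g, h} ⟨f, by simp⟩
    have hx2 := hsub {f, g, h} hx
    simp only [Finset.mem_insert, Finset.mem_singleton] at hx2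
    rcases hx2 with rfl | rfl | rfl
    · exact hx
    · exact hgcase hx
    · exact hgcase (hb ({f, g, x} : Finset H) ({g, x} : Finset H) hghT x (by simp) hx hgh)
  exact ha ({f, g, h} : Finset H) ({f, h} : Finset H) hfhT f key (by simp)

lemma pair_eq {F : (Fin n → H → ℝ) → Finset H → Finset H}
    (hcc : IsChoiceCorrespondence F) (r : Fin n → H → ℝ) {f g : H}
    (hfg : Rb F r f g) (hgf : ¬ Rb F r g f) : F r {f, g} = {f} := by
  apply Finset.Subset.antisymm
  · intro x hx
    have hx2 := (hcc r).1 {f, g} hx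
    simp only [Finset.mem_insert, Finset.mem_singleton] at hx2
    simp only [Finset.mem_singleton]
    rcases hx2 with rfl | rfl
    · rfl
    · refine absurd ?_ hgf
      show x ∈ F r ({x, f} : Finset H)
      rwa [Finset.pair_comm x f]
  · intro x hx
    simp only [Finset.mem_singleton] at hx
    subst hx
    exact hfg

lemma Rb_of_pair {F : (Fin n → H → ℝ) → Finset H → Finset H}
    {r : Fin n → H → ℝ} {f g : H} (h : F r {f, g} = {f}) : Rb F r f g := by
  show f ∈ F r {f, g}
  rw [h]; simp

lemma not_Rb_of_pair {F : (Fin n → H → ℝ) → Finset H → Finset H}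
    {r : Fin n → H → ℝ} {f g : H} (hne : g ≠ f) (h : F r {f, g} = {f}) :
    ¬ Rb F r g f := by
  intro hcon
  have : g ∈ F r ({f, g} : Finset H) := by rwa [Finset.pair_comm f g]
  rw [h] at this
  simp only [Finset.mem_singleton] at this
  exact hne this

/-- IIH specialized to pairs with matching per-environment orderings. -/
lemma iih_pair {F : (Fin n → H → ℝ) → Finset H → Finset H}
    (hIIH : AxIIH F) (r r' : Fin n → H → ℝ) (a b : H)
    (hord : ∀ i, (r i a < r i b ∧ r' i a < r' i b) ∨
      (r i b < r i a ∧ r' i b < r' i a) ∨ (r i a = r i b ∧ r' i a = r' i b)) :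
    F r {a, b} = F r' {a, b} := by
  apply hIIH r r' {a, b} ⟨a, by simp⟩
  intro i x hx y hy
  simp only [Finset.mem_insert, Finset.mem_singleton] at hx hy
  rcases hx with rfl | rfl <;> rcases hy with rfl | rfl <;>
    rcases hord i with ⟨h1, h2⟩ | ⟨h1, h2⟩ | ⟨h1, h2⟩ <;>
    constructor <;> intro h3 <;> linarith

/-- Almost decisiveness of `E` over the ordered pair `(f, g)`. -/
def AlmostDecisive (F : (Fin n → H → ℝ) → Finset H → Finset H)
    (E : Set (Fin n)) (f g : H) : Prop :=
  ∀ r : Fin n → H → ℝ, (∀ e ∈ E, r e f < r e g) → (∀ e, e ∉ E → r e g < r e f) →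
    F r {f, g} = {f}

lemma expand1 {F : (Fin n → H → ℝ) → Finset H → Finset H}
    (hcc : IsChoiceCorrespondence F) (hic : ∀ r, InternallyConsistent (F r))
    (hPO : AxPO F) (hIIH : AxIIH F)
    {E : Set (Fin n)} {f g : H} (hA : AlmostDecisive F E f g) (hfg : f ≠ g)
    {h : H} (hhf : h ≠ f) (hhg : h ≠ g) : LocallyDecisive F E f h := by
  classical
  intro r hr
  set r' : Fin n → H → ℝ := fun e x =>
    if x = g then (if e ∈ E then (r e f + r e h) / 2 else min (r e f) (r e h) - 1)
    else r e x with hr'def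
  have hvf : ∀ e, r' e f = r e f := fun e => by simp [hr'def, hfg]
  have hvh : ∀ e, r' e h = r e h := fun e => by simp [hr'def, hhg]
  have hvgE : ∀ e ∈ E, r' e g = (r e f + r e h) / 2 := fun e he => by simp [hr'def, he]
  have hvgN : ∀ e, e ∉ E → r' e g = min (r e f) (r e h) - 1 := fun e he => by
    simp [hr'def, he]
  have h1 : F r' {f, g} = {f} := by
    apply hA r'
    · intro e he
      rw [hvf, hvgE e he]
      have := hr e he
      linarith
    · intro e he
      rw [hvf, hvgN e he]
      have := min_le_left (r e f) (r e h)
      linarith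
  have h2 : F r' {g, h} = {g} := by
    apply hPO r' g h
    intro i
    by_cases hi : i ∈ E
    · rw [hvgE i hi, hvh]
      have := hr i hi
      linarith
    · rw [hvgN i hi, hvh]
      have := min_le_right (r i f) (r i h)
      linarith
  have Rfg : Rb F r' f g := Rb_of_pair h1
  have nRgf : ¬ Rb F r' g f := not_Rb_of_pair (Ne.symm hfg) h1
  have Rgh : Rb F r' g h := Rb_of_pair h2
  have nRhg : ¬ Rb F r' h g := not_Rb_of_pair hhg h2
  have Rfh : Rb F r' f h := Rb_trans hcc hic r' Rfg Rgh
  have nRhf : ¬ Rb F r' h f := fun hcon => nRhg (Rb_trans hcc hic r' hcon Rfg)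
  have h3 : F r' {f, h} = {f} := pair_eq hcc r' Rfh nRhf
  have h4 : F r {f, h} = F r' {f, h} := by
    apply iih_pair hIIH r r' f h
    intro i
    rcases lt_trichotomy (r i f) (r i h) with ht | ht | ht
    · exact Or.inl ⟨ht, by rw [hvf, hvh]; exact ht⟩
    · exact Or.inr (Or.inr ⟨ht, by rw [hvf, hvh]; exact ht⟩)
    · exact Or.inr (Or.inl ⟨ht, by rw [hvf, hvh]; exact ht⟩)
  rw [h4, h3]

lemma expand2 {F : (Fin n → H → ℝ) → Finset H → Finset H}
    (hcc : IsChoiceCorrespondence F) (hic : ∀ r, InternallyConsistent (F r))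
    (hPO : AxPO F) (hIIH : AxIIH F)
    {E : Set (Fin n)} {f g : H} (hA : AlmostDecisive F E f g) (hfg : f ≠ g)
    {h : H} (hhf : h ≠ f) (hhg : h ≠ g) : LocallyDecisive F E h g := by
  classical
  intro r hr
  set r' : Fin n → H → ℝ := fun e x =>
    if x = f then (if e ∈ E then (r e h + r e g) / 2 else max (r e h) (r e g) + 1)
    else r e x with hr'def
  have hvg : ∀ e, r' e g = r e g := fun e => by simp [hr'def, Ne.symm hfg]
  have hvh : ∀ e, r' e h = r e h := fun e => by simp [hr'def, hhf]
  have hvfE : ∀ e ∈ E, r' e f = (r e h + r e g) / 2 := fun e he => by simp [hr'def, he]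
  have hvfN : ∀ e, e ∉ E → r' e f = max (r e h) (r e g) + 1 := fun e he => by
    simp [hr'def, he]
  have h1 : F r' {f, g} = {f} := by
    apply hA r'
    · intro e he
      rw [hvg, hvfE e he]
      have := hr e he
      linarith
    · intro e he
      rw [hvg, hvfN e he]
      have := le_max_right (r e h) (r e g)
      linarith
  have h2 : F r' {h, f} = {h} := by
    apply hPO r' h f
    intro i
    by_cases hi : i ∈ E
    · rw [hvfE i hi, hvh]
      have := hr i hi
      linarith
    · rw [hvfN i hi, hvh]
      have := le_max_left (r i h) (r i g)
      linarith
  have Rfg : Rb F r' f g := Rb_of_pair h1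
  have nRgf : ¬ Rb F r' g f := not_Rb_of_pair (Ne.symm hfg) h1
  have Rhf : Rb F r' h f := Rb_of_pair h2
  have nRfh : ¬ Rb F r' f h := not_Rb_of_pair (Ne.symm hhf) h2
  have Rhg : Rb F r' h g := Rb_trans hcc hic r' Rhf Rfg
  have nRgh : ¬ Rb F r' g h := fun hcon => nRfh (Rb_trans hcc hic r' Rfg hcon)
  have h3 : F r' {h, g} = {h} := pair_eq hcc r' Rhg nRgh
  have h4 : F r {h, g} = F r' {h, g} := by
    apply iih_pair hIIH r r' h g
    intro i
    rcases lt_trichotomy (r i h) (r i g) with ht | ht | ht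
    · exact Or.inl ⟨ht, by rw [hvg, hvh]; exact ht⟩
    · exact Or.inr (Or.inr ⟨ht, by rw [hvg, hvh]; exact ht⟩)
    · exact Or.inr (Or.inl ⟨ht, by rw [hvg, hvh]; exact ht⟩)
  rw [h4, h3]

lemma exists_third (hH : ∃ f g h : H, f ≠ g ∧ f ≠ h ∧ g ≠ h) (x y : H) :
    ∃ c : H, c ≠ x ∧ c ≠ y := by
  obtain ⟨a, b, c, hab, hac, hbc⟩ := hH
  by_cases h1 : a ≠ x ∧ a ≠ y
  · exact ⟨a, h1⟩
  by_cases h2 : b ≠ x ∧ b ≠ y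
  · exact ⟨b, h2⟩
  by_cases h3 : c ≠ x ∧ c ≠ y
  · exact ⟨c, h3⟩
  exfalso
  rw [not_and_or, not_not, not_not] at h1 h2 h3
  rcases h1 with rfl | rfl <;> rcases h2 with rfl | rfl <;> rcases h3 with rfl | rfl <;>
    simp_all

lemma globallyDecisive_of_almost {F : (Fin n → H → ℝ) → Finset H → Finset H}
    (hcc : IsChoiceCorrespondence F) (hic : ∀ r, InternallyConsistent (F r))
    (hPO : AxPO F) (hIIH : AxIIH F)
    (hH3 : ∃ f g h : H, f ≠ g ∧ f ≠ h ∧ g ≠ h)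
    {E : Set (Fin n)} {f g : H} (hA : AlmostDecisive F E f g) (hfg : f ≠ g) :
    GloballyDecisive F E := by
  have LA : ∀ {a b : H}, LocallyDecisive F E a b → AlmostDecisive F E a b :=
    fun hL r h1 _ => hL r h1
  have six : ∀ c : H, c ≠ f → c ≠ g →
      LocallyDecisive F E f g ∧ LocallyDecisive F E g f ∧ LocallyDecisive F E f c ∧
      LocallyDecisive F E c f ∧ LocallyDecisive F E g c ∧ LocallyDecisive F E c g := by
    intro c hcf hcg
    have s1 : LocallyDecisive F E f c := expand1 hcc hic hPO hIIH hA hfg hcf hcg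
    have s2 : LocallyDecisive F E c g := expand2 hcc hic hPO hIIH hA hfg hcf hcg
    have s3 : LocallyDecisive F E c f :=
      expand1 hcc hic hPO hIIH (LA s2) hcg (Ne.symm hcf) hfg
    have s4 : LocallyDecisive F E f g :=
      expand2 hcc hic hPO hIIH (LA s2) hcg (Ne.symm hcf) hfg
    have s5 : LocallyDecisive F E g c :=
      expand2 hcc hic hPO hIIH (LA s1) (Ne.symm hcf) (Ne.symm hfg) (Ne.symm hcg)
    have s6 : LocallyDecisive F E g f :=
      expand1 hcc hic hPO hIIH (LA s5) (Ne.symm hcg) hfg (Ne.symm hcf)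
    exact ⟨s4, s6, s1, s3, s5, s2⟩
  intro x y hxy
  by_cases hx : x = f
  · subst hx
    by_cases hy : y = g
    · subst hy
      obtain ⟨c, hcf, hcg⟩ := exists_third hH3 x y
      exact (six c hcf hcg).1
    · exact (six y (Ne.symm hxy) hy).2.2.1
  · by_cases hx2 : x = g
    · subst hx2
      by_cases hy : y = f
      · subst hy
        obtain ⟨c, hcf, hcg⟩ := exists_third hH3 y x
        exact (six c hcf hcg).2.1
      · exact (six y hy (Ne.symm hxy)).2.2.2.2.1
    · by_cases hy : y = g
      · subst hy
        exact (six x hx hx2).2.2.2.2.2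
      · by_cases hy2 : y = f
        · subst hy2
          exact (six x hx hx2).2.2.2.1
        · have hxg : LocallyDecisive F E x g := (six x hx hx2).2.2.2.2.2
          exact expand1 hcc hic hPO hIIH (LA hxg) hx2 (Ne.symm hxy) hy

lemma contraction_s9 {F : (Fin n → H → ℝ) → Finset H → Finset H}
    (hcc : IsChoiceCorrespondence F) (hic : ∀ r, InternallyConsistent (F r))
    (hPO : AxPO F) (hIIH : AxIIH F)
    (hH3 : ∃ f g h : H, f ≠ g ∧ f ≠ h ∧ g ≠ h) :
    ∀ m : ℕ, ∀ E : Finset (Fin n), E.card ≤ m → E.Nonempty →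
      GloballyDecisive F (↑E : Set (Fin n)) →
      ∃ i : Fin n, GloballyDecisive F ({i} : Set (Fin n)) := by
  intro m
  induction m with
  | zero =>
    intro E hcard hne _
    have := Finset.card_pos.mpr hne
    omega
  | succ m ih =>
    intro E hcard hne hdec
    obtain ⟨i, hi⟩ := hne
    by_cases hone : E = {i}
    · refine ⟨i, ?_⟩
      rw [hone, Finset.coe_singleton] at hdec
      exact hdec
    · obtain ⟨f, g, h, hfg, hfh, hgh⟩ := hH3
      classical
      set r : Fin n → H → ℝ := fun e x =>
        if e = i then (if x = f then 0 else if x = g then 1 else 2)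
        else if e ∈ E then (if x = g then 0 else if x = h then 1 else 2)
        else (if x = h then 0 else if x = f then 1 else 2) with hrdef
      have vif : r i f = 0 := by simp [hrdef]
      have vig : r i g = 1 := by simp [hrdef, Ne.symm hfg]
      have vih : r i h = 2 := by simp [hrdef, Ne.symm hfh, Ne.symm hgh]
      have vEg : ∀ e, e ≠ i → e ∈ E → r e g = 0 := fun e h1 h2 => by
        simp [hrdef, h1, h2]
      have vEh : ∀ e, e ≠ i → e ∈ E → r e h = 1 := fun e h1 h2 => by
        simp [hrdef, h1, h2, Ne.symm hgh]
      have vEf : ∀ e, e ≠ i → e ∈ E → r e f = 2 := fun e h1 h2 => by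
        simp [hrdef, h1, h2, hfg, hfh]
      have vNh : ∀ e, e ≠ i → e ∉ E → r e h = 0 := fun e h1 h2 => by
        simp [hrdef, h1, h2]
      have vNf : ∀ e, e ≠ i → e ∉ E → r e f = 1 := fun e h1 h2 => by
        simp [hrdef, h1, h2, hfh]
      have vNg : ∀ e, e ≠ i → e ∉ E → r e g = 2 := fun e h1 h2 => by
        simp [hrdef, h1, h2, hgh, Ne.symm hfg]
      have hgh2 : F r {g, h} = {g} := by
        apply hdec g h hgh r
        intro e he
        rw [Finset.mem_coe] at he
        by_cases he1 : e = i
        · subst he1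
          rw [vig, vih]
          norm_num
        · rw [vEg e he1 he, vEh e he1 he]
          norm_num
      by_cases hfh2 : F r {f, h} = {f}
      · -- {i} is almost decisive over (f, h)
        have hAD : AlmostDecisive F ({i} : Set (Fin n)) f h := by
          intro r'' h1 h2
          have heq : F r'' {f, h} = F r {f, h} := by
            apply iih_pair hIIH r'' r f h
            intro e
            by_cases he : e = i
            · subst he
              refine Or.inl ⟨h1 e rfl, ?_⟩
              rw [vif, vih]
              norm_num
            · refine Or.inr (Or.inl ⟨h2 e (fun hmem => he (Set.mem_singleton_iff.mp hmem)), ?_⟩)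
              by_cases heE : e ∈ E
              · rw [vEh e he heE, vEf e he heE]
                norm_num
              · rw [vNh e he heE, vNf e he heE]
                norm_num
          rw [heq, hfh2]
        exact ⟨i, globallyDecisive_of_almost hcc hic hPO hIIH ⟨f, g, h, hfg, hfh, hgh⟩ hAD hfh⟩
      · -- E.erase i is almost decisive over (g, f)
        have Rgh : Rb F r g h := Rb_of_pair hgh2
        have nRhg : ¬ Rb F r h g := not_Rb_of_pair (Ne.symm hgh) hgh2
        have Rhf : Rb F r h f := by
          rcases Rb_total hcc r f h with hx | hx
          · by_contra hcon
            exact hfh2 (pair_eq hcc r hx hcon)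
          · exact hx
        have Rgf : Rb F r g f := Rb_trans hcc hic r Rgh Rhf
        have nRfg : ¬ Rb F r f g := fun hcon => nRhg (Rb_trans hcc hic r Rhf hcon)
        have hgf2 : F r {g, f} = {g} := pair_eq hcc r Rgf nRfg
        have hE2ne : (E.erase i).Nonempty := by
          have hmem : ∃ j ∈ E, j ≠ i := by
            by_contra hcon
            push_neg at hcon
            exact hone (Finset.eq_singleton_iff_unique_mem.mpr ⟨hi, hcon⟩)
          obtain ⟨j, hj1, hj2⟩ := hmem
          exact ⟨j, Finset.mem_erase.mpr ⟨hj2, hj1⟩⟩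
        have hAD : AlmostDecisive F (↑(E.erase i) : Set (Fin n)) g f := by
          intro r'' h1 h2
          have heq : F r'' {g, f} = F r {g, f} := by
            apply iih_pair hIIH r'' r g f
            intro e
            by_cases he : e ∈ E.erase i
            · obtain ⟨he1, he2⟩ := Finset.mem_erase.mp he
              refine Or.inl ⟨h1 e (Finset.mem_coe.mpr he), ?_⟩
              rw [vEg e he1 he2, vEf e he1 he2]
              norm_num
            · refine Or.inr (Or.inl ⟨h2 e (fun hmem => he (Finset.mem_coe.mp hmem)), ?_⟩)
              by_cases he1 : e = i
              · subst he1
                rw [vif, vig]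
                norm_num
              · have heE : e ∉ E := fun hE => he (Finset.mem_erase.mpr ⟨he1, hE⟩)
                rw [vNf e he1 heE, vNg e he1 heE]
                norm_num
          rw [heq, hgf2]
        have hdec2 := globallyDecisive_of_almost hcc hic hPO hIIH
          ⟨f, g, h, hfg, hfh, hgh⟩ hAD (Ne.symm hfg)
        refine ih (E.erase i) ?_ hE2ne hdec2
        have := Finset.card_erase_of_mem hi
        omega

end Aux


/-- Under internal consistency, nonempty-valuedness, PO, IIH, and IR, there is a single
environment whose singleton is globally decisive; in particular, `F` violates CI. -/
theorem exists_dictatorial_environment [DecidableEq H] (n : ℕ) (hn : 3 ≤ n)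
    (hH : ∃ f g h : H, f ≠ g ∧ f ≠ h ∧ g ≠ h)
    (F : (Fin n → H → ℝ) → Finset H → Finset H)
    (hcc : IsChoiceCorrespondence F)
    (hic : ∀ r : Fin n → H → ℝ, InternallyConsistent (F r))
    (hPO : AxPO F) (hIIH : AxIIH F) (hIR : AxIR F) :
    (∃ i : Fin n, GloballyDecisive F ({i} : Set (Fin n))) ∧ ¬ AxCI F := by
  classical
  have hnu : (Finset.univ : Finset (Fin n)).Nonempty := ⟨⟨0, by omega⟩, Finset.mem_univ _⟩
  have huniv : GloballyDecisive F (↑(Finset.univ : Finset (Fin n)) : Set (Fin n)) := by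
    intro f g hfg r hr
    exact hPO r f g (fun i => hr i (by simp))
  obtain ⟨i, hd⟩ := contraction_s9 hcc hic hPO hIIH hH n Finset.univ (by simp) hnu huniv
  refine ⟨⟨i, hd⟩, ?_⟩
  intro hCI
  apply hCI
  refine ⟨i, fun r f g hlt => ?_⟩
  have hfg : f ≠ g := fun hEq => by rw [hEq] at hlt; exact lt_irrefl _ hlt
  exact hd f g hfg r (fun e he => by rw [Set.mem_singleton_iff] at he; subst he; exact hlt)
end
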